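/- arXiv:1101.4787 — 8 statements merged into one kernel-verified Lean document; each statement's English description precedes it below -/
import Mathlib

section
/- If μ is a fuzzy h-ideal of the left operator hemiring L of a Γ-hemiring S with μ(0_L) = 1, then μ⁺, defined by μ⁺(x) = inf_{γ∈Γ} μ([x,γ]), is a fuzzy h-ideal of S with μ⁺(0_S) = 1. -/
open scoped Classical

/-- A `Γ`-hemiring structure on additive commutative monoids `S` and `Γ`. -/
structure GammaHemiring (S : Type) (Γ : Type) [AddCommMonoid S] [AddCommMonoid Γ] : Type where
  tri : S → Γ → S → S
  add_left : ∀ a b α c, tri (a + b) α c = tri a α c + tri b α c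
  add_mid : ∀ a α β b, tri a (α + β) b = tri a α b + tri a β b
  add_right : ∀ a α b c, tri a α (b + c) = tri a α b + tri a α c
  tri_assoc : ∀ a α b β c, tri a α (tri b β c) = tri (tri a α b) β c
  zero_left : ∀ α a, tri 0 α a = 0
  zero_right : ∀ a α, tri a α 0 = 0
  zero_mid : ∀ a b, tri a 0 b = 0

namespace GammaHemiring

variable {S Γ : Type} [AddCommMonoid S] [AddCommMonoid Γ] (H : GammaHemiring S Γ)

/-- Action of a formal sum `Σ (xᵢ, αᵢ)` on an element of `S`. -/
def lAct (u : Multiset (S × Γ)) (a : S) : S := (u.map fun p => H.tri p.1 p.2 a).sum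

/-- The congruence `ρ` on the free additive commutative semigroup on `S × Γ`. -/
def lSetoid : Setoid (Multiset (S × Γ)) where
  r u v := ∀ a, H.lAct u a = H.lAct v a
  iseqv := ⟨fun _ _ => rfl, fun h a => (h a).symm, fun h1 h2 a => (h1 a).trans (h2 a)⟩

/-- The left operator hemiring `L` of a `Γ`-hemiring `S`. -/
def LOp := Quotient H.lSetoid

/-- Multiplication of formal sums: `(Σ[xᵢ,αᵢ])(Σ[yⱼ,βⱼ]) = Σ[xᵢαᵢyⱼ, βⱼ]`. -/
def lMul (u v : Multiset (S × Γ)) : Multiset (S × Γ) :=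
  u.bind fun p => v.map fun q => (H.tri p.1 p.2 q.1, q.2)

lemma lAct_add (u v : Multiset (S × Γ)) (a : S) :
    H.lAct (u + v) a = H.lAct u a + H.lAct v a := by
  simp [lAct]

lemma tri_sum (x : S) (α : Γ) (m : Multiset S) :
    H.tri x α m.sum = (m.map (H.tri x α)).sum := by
  induction m using Multiset.induction_on with
  | empty => simp [H.zero_right]
  | cons b m ih => simp [H.add_right, ih]

lemma lAct_arg_add (u : Multiset (S × Γ)) (b c : S) :
    H.lAct u (b + c) = H.lAct u b + H.lAct u c := by
  simp only [lAct, H.add_right]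
  rw [← Multiset.sum_map_add]

lemma lAct_arg_zero (u : Multiset (S × Γ)) : H.lAct u 0 = 0 := by
  simp [lAct, H.zero_right]

lemma lAct_zero (a : S) : H.lAct 0 a = 0 := by simp [lAct]

lemma lAct_mul (u v : Multiset (S × Γ)) (a : S) :
    H.lAct (H.lMul u v) a = H.lAct u (H.lAct v a) := by
  unfold lAct lMul
  rw [Multiset.map_bind, Multiset.sum_bind]
  congr 1
  refine Multiset.map_congr rfl ?_
  intro p _
  rw [tri_sum, Multiset.map_map, Multiset.map_map]
  congr 1
  refine Multiset.map_congr rfl ?_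
  intro q _
  simp [Function.comp, H.tri_assoc]

noncomputable instance : Add H.LOp :=
  ⟨Quotient.map₂ (· + ·) (fun {u u'} hu {v v'} hv a => by
    rw [lAct_add, lAct_add, hu a, hv a])⟩

noncomputable instance : Zero H.LOp := ⟨Quotient.mk H.lSetoid 0⟩

noncomputable instance : Mul H.LOp :=
  ⟨Quotient.map₂ H.lMul (fun {u u'} hu {v v'} hv a => by
    rw [lAct_mul, lAct_mul, hv a, hu (H.lAct v' a)])⟩

/-- The left operator hemiring structure. -/
noncomputable instance : NonUnitalSemiring H.LOp where
  add := (· + ·)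
  zero := 0
  mul := (· * ·)
  nsmul := nsmulRec
  nsmul_zero := fun _ => rfl
  nsmul_succ := fun _ _ => rfl
  add_assoc a b c := Quotient.inductionOn₃ a b c fun u v w =>
    congrArg (Quotient.mk _) (add_assoc u v w)
  zero_add a := Quotient.inductionOn a fun u => congrArg (Quotient.mk _) (zero_add u)
  add_zero a := Quotient.inductionOn a fun u => congrArg (Quotient.mk _) (add_zero u)
  add_comm a b := Quotient.inductionOn₂ a b fun u v => congrArg (Quotient.mk _) (add_comm u v)
  left_distrib a b c := Quotient.inductionOn₃ a b c fun u v w => Quotient.sound fun s => by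
    simp [lAct_mul, lAct_add, lAct_arg_add]
  right_distrib a b c := Quotient.inductionOn₃ a b c fun u v w => Quotient.sound fun s => by
    simp [lAct_mul, lAct_add]
  zero_mul a := Quotient.inductionOn a fun u => Quotient.sound fun s => by
    simp [lAct_mul, lAct_zero]
  mul_zero a := Quotient.inductionOn a fun u => Quotient.sound fun s => by
    simp [lAct_mul, lAct_zero, lAct_arg_zero]
  mul_assoc a b c := Quotient.inductionOn₃ a b c fun u v w => Quotient.sound fun s => by
    simp [lAct_mul]

/-- The class of a formal sum in `L`. -/
def lMk (u : Multiset (S × Γ)) : H.LOp := Quotient.mk H.lSetoid u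

lemma mk_add (u v : Multiset (S × Γ)) : H.lMk u + H.lMk v = H.lMk (u + v) := rfl

lemma mk_mul (u v : Multiset (S × Γ)) : H.lMk u * H.lMk v = H.lMk (H.lMul u v) := rfl

/-- Action of an element of `L` on `S`. -/
def lActQ : H.LOp → S → S := Quotient.lift H.lAct (fun _ _ h => funext h)

end GammaHemiring
instance : Fact ((0:ℝ) ≤ 1) := ⟨zero_le_one⟩

/-- Characteristic function of a subset, valued in the unit interval. -/
noncomputable def fuzzyChar {X : Type} (A : Set X) (x : X) : unitInterval :=
  if x ∈ A then 1 else 0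

/-- A fuzzy h-ideal of a hemiring. -/
def IsFuzzyHIdeal {T : Type} [NonUnitalSemiring T] (μ : T → unitInterval) : Prop :=
  (∀ x y, μ x ⊓ μ y ≤ μ (x + y)) ∧
  (∀ x y, μ x ⊔ μ y ≤ μ (x * y)) ∧
  (∀ x a b z, x + a + z = b + z → μ a ⊓ μ b ≤ μ x)

namespace GammaHemiring

variable {S Γ : Type} [AddCommMonoid S] [AddCommMonoid Γ] (H : GammaHemiring S Γ)

/-- A fuzzy h-ideal of a `Γ`-hemiring. -/
def IsGFuzzyHIdeal (μ : S → unitInterval) : Prop :=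
  (∀ x y, μ x ⊓ μ y ≤ μ (x + y)) ∧
  (∀ x γ y, μ x ⊔ μ y ≤ μ (H.tri x γ y)) ∧
  (∀ x a b z, x + a + z = b + z → μ a ⊓ μ b ≤ μ x)

/-- For a fuzzy subset `μ` of `L`, the fuzzy subset `μ⁺` of `S`, `μ⁺(x) = inf_γ μ([x,γ])`. -/
noncomputable def plusMap (μ : H.LOp → unitInterval) (x : S) : unitInterval :=
  ⨅ γ : Γ, μ (H.lMk {(x, γ)})

/-- For a fuzzy subset `σ` of `S`, the fuzzy subset `σ⁺′` of `L`,
`σ⁺′(Σᵢ[xᵢ,αᵢ]) = inf_s σ(Σᵢ xᵢαᵢs)`. -/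
noncomputable def plusPrime (σ : S → unitInterval) : H.LOp → unitInterval :=
  Quotient.lift (fun u => ⨅ s : S, σ (H.lAct u s))
    (fun u v h => iInf_congr fun s => by rw [h s])

/-- A left unity of `S`: an element `Σᵢ[eᵢ,δᵢ]` of `L` acting as the identity. -/
def IsLeftUnity (E : Multiset (S × Γ)) : Prop := ∀ a : S, H.lAct E a = a

/-- A right unity of `S`: a formal sum `Σⱼ[γⱼ,fⱼ]` with `Σⱼ a γⱼ fⱼ = a` for all `a`. -/
def IsRightUnity (E : Multiset (Γ × S)) : Prop :=
  ∀ a : S, ((E.map fun p => H.tri a p.1 p.2).sum) = a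

end GammaHemiring
/-- if `μ` is a fuzzy h-ideal of `L` with `μ(0_L) = 1`, then `μ⁺` is a fuzzy
h-ideal of `S` with `μ⁺(0_S) = 1`. -/
theorem plusMap_fuzzyHIdeal {S Γ : Type} [AddCommMonoid S] [AddCommMonoid Γ]
    (H : GammaHemiring S Γ) (μ : H.LOp → unitInterval)
    (hμ : IsFuzzyHIdeal μ) (hμ0 : μ 0 = 1) :
    H.IsGFuzzyHIdeal (H.plusMap μ) ∧ H.plusMap μ 0 = 1 := by
  obtain ⟨hadd, hmul, hh⟩ := hμ
  have key_add : ∀ (x y : S) (γ : Γ),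
      H.lMk {(x + y, γ)} = H.lMk {(x, γ)} + H.lMk {(y, γ)} := by
    intro x y γ
    refine (Quotient.sound fun a => ?_).symm
    simp [GammaHemiring.lAct, H.add_left]
  have key_mul : ∀ (x y : S) (γ δ : Γ),
      H.lMk {(H.tri x γ y, δ)} = H.lMk {(x, γ)} * H.lMk {(y, δ)} := by
    intro x y γ δ
    refine (Quotient.sound fun a => ?_).symm
    simp [GammaHemiring.lAct, GammaHemiring.lMul]
  have key_zero : ∀ γ : Γ, H.lMk {((0 : S), γ)} = 0 := by
    intro γ
    refine Quotient.sound fun a => ?_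
    simp [GammaHemiring.lAct, H.zero_left]
  refine ⟨⟨?_, ?_, ?_⟩, ?_⟩
  · intro x y
    refine le_iInf fun γ => ?_
    rw [key_add]
    refine le_trans ?_ (hadd _ _)
    exact inf_le_inf (iInf_le _ γ) (iInf_le _ γ)
  · intro x γ y
    refine le_iInf fun δ => ?_
    rw [key_mul]
    refine le_trans ?_ (hmul _ _)
    exact sup_le_sup (iInf_le _ γ) (iInf_le _ δ)
  · intro x a b z hxz
    refine le_iInf fun γ => ?_
    have hL : H.lMk {(x, γ)} + H.lMk {(a, γ)} + H.lMk {(z, γ)}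
        = H.lMk {(b, γ)} + H.lMk {(z, γ)} := by
      rw [← key_add, ← key_add, ← key_add, hxz]
    refine le_trans ?_ (hh _ _ _ _ hL)
    exact inf_le_inf (iInf_le _ γ) (iInf_le _ γ)
  · refine le_antisymm le_top (le_iInf fun γ => ?_)
    rw [key_zero, hμ0]
end

section
/- If σ is a fuzzy h-ideal of a Γ-hemiring S with σ(0_S)=1, then σ⁺′, defined on L by σ⁺′(Σᵢ[xᵢ,αᵢ]) = inf_{s∈S} σ(Σᵢ xᵢαᵢs), is a well-defined fuzzy h-ideal of the left operator hemiring L with σ⁺′(0_L)=1. -/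
open scoped Classical

lemma sigma_le_lAct {S Γ : Type} [AddCommMonoid S] [AddCommMonoid Γ]
    (H : GammaHemiring S Γ) (σ : S → unitInterval)
    (hσ : H.IsGFuzzyHIdeal σ) (hσ0 : σ 0 = 1) (u : Multiset (S × Γ)) (t : S) :
    σ t ≤ σ (H.lAct u t) := by
  induction u using Multiset.induction_on with
  | empty => simp [GammaHemiring.lAct, hσ0]; exact le_top
  | cons p u ih =>
    have h1 : σ t ≤ σ (H.tri p.1 p.2 t) := le_trans le_sup_right (hσ.2.1 p.1 p.2 t)
    have : σ t ⊓ σ t ≤ σ (H.tri p.1 p.2 t + H.lAct u t) :=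
      le_trans (inf_le_inf h1 ih) (hσ.1 _ _)
    simpa [GammaHemiring.lAct] using this

/-- if `σ` is a fuzzy h-ideal of `S` with `σ(0_S) = 1`, then `σ⁺′` (which is
well defined on the quotient `L` by construction) is a fuzzy h-ideal of `L` with
`σ⁺′(0_L) = 1`. -/
theorem plusPrime_fuzzyHIdeal {S Γ : Type} [AddCommMonoid S] [AddCommMonoid Γ]
    (H : GammaHemiring S Γ) (σ : S → unitInterval)
    (hσ : H.IsGFuzzyHIdeal σ) (hσ0 : σ 0 = 1) :
    IsFuzzyHIdeal (H.plusPrime σ) ∧ H.plusPrime σ 0 = 1 := by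
  constructor
  · refine ⟨?_, ?_, ?_⟩
    · intro x y
      refine Quotient.inductionOn₂ x y fun u v => ?_
      refine le_iInf fun s => ?_
      refine le_trans (inf_le_inf (iInf_le _ s) (iInf_le _ s)) ?_
      have := hσ.1 (H.lAct u s) (H.lAct v s)
      simpa [GammaHemiring.lAct_add] using this
    · intro x y
      refine Quotient.inductionOn₂ x y fun u v => ?_
      refine le_iInf fun s => ?_
      show (⨅ s, σ (H.lAct u s)) ⊔ (⨅ s, σ (H.lAct v s)) ≤ σ (H.lAct (H.lMul u v) s)
      rw [GammaHemiring.lAct_mul]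
      refine sup_le ?_ ?_
      · exact iInf_le _ (H.lAct v s)
      · exact le_trans (iInf_le _ s) (sigma_le_lAct H σ hσ hσ0 u _)
    · intro x a b z h
      induction x using Quotient.inductionOn with | _ u => ?_
      induction a using Quotient.inductionOn with | _ v => ?_
      induction b using Quotient.inductionOn with | _ w => ?_
      induction z using Quotient.inductionOn with | _ t => ?_
      have hr := Quotient.exact h
      refine le_iInf fun s => ?_
      refine le_trans (inf_le_inf (iInf_le _ s) (iInf_le _ s)) ?_
      refine hσ.2.2 _ _ _ (H.lAct t s) ?_
      have := hr s
      simpa [GammaHemiring.lAct_add] using this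
  · show (⨅ s, σ (H.lAct 0 s)) = 1
    simp [GammaHemiring.lAct_zero, hσ0]
end

section
/- Let S be a Γ-hemiring possessing a left unity Σᵢ[eᵢ,δᵢ] ∈ L and a right unity Σⱼ[γⱼ,fⱼ] ∈ R. Then for every fuzzy h-ideal σ of S with σ(0)=1 one has (σ⁺′)⁺ = σ, and for every fuzzy h-ideal μ of L with μ(0_L)=1 one has (μ⁺)⁺′ = μ. -/
open scoped Classical

/-! `(σ⁺′)⁺(x) = inf_{γ,s} σ(xγs)` is at least `σ(x)` because `σ` is an ideal, and at most `σ(x)`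
because `x = Σⱼ xγⱼfⱼ` and `σ` of a sum is at least the minimum over its terms. Dually,
`(μ⁺)⁺′[u] = inf_{s,γ} μ[us,γ]`, and `[us,γ] = [u][s,γ]` gives the lower bound `μ[u]`, while
`[u] = [u]·Σᵢ[eᵢ,δᵢ] = Σᵢ[ueᵢ,δᵢ]` gives the upper one. -/

lemma le_apply_multiset_sum {T α : Type} [AddCommMonoid T] [SemilatticeInf α] {μ : T → α}
    (hadd : ∀ x y, μ x ⊓ μ y ≤ μ (x + y)) {t : α} (hzero : t ≤ μ 0) {m : Multiset T}
    (h : ∀ a ∈ m, t ≤ μ a) : t ≤ μ m.sum :=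
  let level : AddSubmonoid T :=
    { carrier := {x | t ≤ μ x}
      add_mem' := fun ha hb => (le_inf ha hb).trans (hadd _ _)
      zero_mem' := hzero }
  level.multiset_sum_mem m h

namespace GammaHemiring

variable {S Γ : Type} [AddCommMonoid S] [AddCommMonoid Γ] (H : GammaHemiring S Γ)

lemma lAct_singleton (x : S) (γ : Γ) (a : S) : H.lAct {(x, γ)} a = H.tri x γ a := by
  simp [lAct]

lemma tri_lAct (u : Multiset (S × Γ)) (s : S) (γ : Γ) (a : S) :
    H.tri (H.lAct u s) γ a = H.lAct u (H.tri s γ a) := by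
  induction u using Multiset.induction_on with
  | empty => simp [lAct, H.zero_left]
  | cons p u ih => simp_all [lAct, H.add_left, H.tri_assoc]

lemma lMk_singleton_lAct (u : Multiset (S × Γ)) (s : S) (γ : Γ) :
    H.lMk {(H.lAct u s, γ)} = H.lMk u * H.lMk {(s, γ)} :=
  Quotient.sound fun a => by rw [lAct_singleton, tri_lAct, lAct_mul, lAct_singleton]

lemma lMk_eq_sum_singleton (w : Multiset (S × Γ)) :
    H.lMk w = (w.map fun p => H.lMk {p}).sum := by
  induction w using Multiset.induction_on with
  | empty => rfl
  | cons p w ih => rw [← Multiset.singleton_add, ← mk_add, ih, Multiset.map_add,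
      Multiset.sum_add, Multiset.map_singleton, Multiset.sum_singleton]

variable {H}

lemma IsLeftUnity.lMk_mul_right {E : Multiset (S × Γ)} (hE : H.IsLeftUnity E)
    (u : Multiset (S × Γ)) : H.lMk u * H.lMk E = H.lMk u :=
  Quotient.sound fun a => by rw [lAct_mul, hE a]

lemma IsLeftUnity.sum_lMk_lAct {E : Multiset (S × Γ)} (hE : H.IsLeftUnity E)
    (u : Multiset (S × Γ)) : (E.map fun q => H.lMk {(H.lAct u q.1, q.2)}).sum = H.lMk u := by
  simp only [lMk_singleton_lAct]
  rw [Multiset.sum_map_mul_left, ← lMk_eq_sum_singleton, hE.lMk_mul_right]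

lemma plusMap_plusPrime_apply (σ : S → unitInterval) (x : S) :
    H.plusMap (H.plusPrime σ) x = ⨅ (γ : Γ) (s : S), σ (H.tri x γ s) := by
  simp only [plusMap, plusPrime, lMk, Quotient.lift_mk, lAct_singleton]

lemma IsRightUnity.plusMap_plusPrime {E' : Multiset (Γ × S)} (hE' : H.IsRightUnity E')
    {σ : S → unitInterval} (hσ : H.IsGFuzzyHIdeal σ) (h0 : σ 0 = 1) :
    H.plusMap (H.plusPrime σ) = σ := by
  funext x
  rw [plusMap_plusPrime_apply]
  refine le_antisymm ?_ (le_iInf₂ fun γ s => le_sup_left.trans (hσ.2.1 x γ s))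
  calc ⨅ (γ : Γ) (s : S), σ (H.tri x γ s)
      ≤ σ (E'.map fun p => H.tri x p.1 p.2).sum :=
        le_apply_multiset_sum hσ.1 (h0 ▸ unitInterval.le_one _)
          (Multiset.forall_mem_map_iff.2 fun p _ => iInf_le_of_le p.1 (iInf_le _ p.2))
    _ = σ x := by rw [hE' x]

lemma IsLeftUnity.plusPrime_plusMap {E : Multiset (S × Γ)} (hE : H.IsLeftUnity E)
    {μ : H.LOp → unitInterval} (hμ : IsFuzzyHIdeal μ) (h0 : μ 0 = 1) :
    H.plusPrime (H.plusMap μ) = μ := by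
  funext v
  induction v using Quotient.inductionOn with
  | h u =>
    change ⨅ (s : S) (γ : Γ), μ (H.lMk {(H.lAct u s, γ)}) = μ (H.lMk u)
    refine le_antisymm ?_ (le_iInf₂ fun s γ => ?_)
    · calc ⨅ (s : S) (γ : Γ), μ (H.lMk {(H.lAct u s, γ)})
          ≤ μ (E.map fun q => H.lMk {(H.lAct u q.1, q.2)}).sum :=
            le_apply_multiset_sum hμ.1 (h0 ▸ unitInterval.le_one _)
              (Multiset.forall_mem_map_iff.2 fun q _ => iInf_le_of_le q.1 (iInf_le _ q.2))
        _ = μ (H.lMk u) := by rw [hE.sum_lMk_lAct]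
    · rw [lMk_singleton_lAct]
      exact le_sup_left.trans (hμ.2.1 _ _)

end GammaHemiring

/-- if `S` has a left unity and a right unity, then `(σ⁺′)⁺ = σ` for every
fuzzy h-ideal `σ` of `S` with `σ(0)=1`, and `(μ⁺)⁺′ = μ` for every fuzzy h-ideal `μ` of `L`
with `μ(0_L)=1`. -/
theorem plusPrime_plusMap_inverse {S Γ : Type} [AddCommMonoid S] [AddCommMonoid Γ]
    (H : GammaHemiring S Γ)
    (E : Multiset (S × Γ)) (hE : H.IsLeftUnity E)
    (E' : Multiset (Γ × S)) (hE' : H.IsRightUnity E') :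
    (∀ σ : S → unitInterval, H.IsGFuzzyHIdeal σ → σ 0 = 1 →
      H.plusMap (H.plusPrime σ) = σ) ∧
    (∀ μ : H.LOp → unitInterval, IsFuzzyHIdeal μ → μ 0 = 1 →
      H.plusPrime (H.plusMap μ) = μ) :=
  ⟨fun _ hσ h0 => hE'.plusMap_plusPrime hσ h0, fun _ hμ h0 => hE.plusPrime_plusMap hμ h0⟩
end

section
/- Let S be a Γ-hemiring with left and right unities. The map I ↦ I⁺′ is an inclusion-preserving bijection (lattice isomorphism) from the set of h-ideals of S onto the set of h-ideals of the left operator hemiring L, with inverse J ↦ J⁺. -/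
open scoped Classical

namespace GammaHemiring

variable {S Γ : Type} [AddCommMonoid S] [AddCommMonoid Γ] (H : GammaHemiring S Γ)

/-- An h-ideal of a `Γ`-hemiring. -/
def IsGHIdeal (I : Set S) : Prop :=
  0 ∈ I ∧ (∀ a b, a ∈ I → b ∈ I → a + b ∈ I) ∧
  (∀ a γ x, a ∈ I → H.tri a γ x ∈ I) ∧ (∀ a γ x, a ∈ I → H.tri x γ a ∈ I) ∧
  (∀ x a b z, x + a + z = b + z → a ∈ I → b ∈ I → x ∈ I)

/-- `I⁺′ = {Σᵢ[xᵢ,αᵢ] ∈ L : (Σᵢ[xᵢ,αᵢ])S ⊆ I}`, where `(Σᵢ[xᵢ,αᵢ])S` consists of all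
finite sums `Σ_{i,k} xᵢαᵢs_k`. -/
def plusPrimeSet (I : Set S) : Set H.LOp :=
  {l | ∀ m : Multiset S, m ≠ 0 → (m.map (H.lActQ l)).sum ∈ I}

/-- `J⁺ = {a ∈ S : [a,Γ] ⊆ J}`. -/
def plusSet (J : Set H.LOp) : Set S := {a | ∀ γ : Γ, H.lMk {(a, γ)} ∈ J}

end GammaHemiring

/-- An h-ideal of a hemiring. -/
def IsHIdeal {T : Type} [NonUnitalSemiring T] (J : Set T) : Prop :=
  0 ∈ J ∧ (∀ a b, a ∈ J → b ∈ J → a + b ∈ J) ∧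
  (∀ a x, a ∈ J → x * a ∈ J) ∧ (∀ a x, a ∈ J → a * x ∈ J) ∧
  (∀ x a b z, x + a + z = b + z → a ∈ J → b ∈ J → x ∈ J)
namespace GammaHemiring

variable {S Γ : Type} [AddCommMonoid S] [AddCommMonoid Γ] (H : GammaHemiring S Γ)

lemma lActQ_mk (u : Multiset (S × Γ)) (s : S) : H.lActQ (H.lMk u) s = H.lAct u s := rfl

lemma lActQ_add (l l' : H.LOp) (s : S) :
    H.lActQ (l + l') s = H.lActQ l s + H.lActQ l' s :=
  Quotient.inductionOn₂ l l' fun u v => H.lAct_add u v s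

lemma lActQ_mul (l l' : H.LOp) (s : S) :
    H.lActQ (l * l') s = H.lActQ l (H.lActQ l' s) :=
  Quotient.inductionOn₂ l l' fun u v => H.lAct_mul u v s

lemma lActQ_zero (s : S) : H.lActQ 0 s = 0 := H.lAct_zero s

lemma lAct_single (x : S) (γ : Γ) (t : S) : H.lAct {(x, γ)} t = H.tri x γ t := by
  simp [lAct]

lemma tri_sum_left (m : Multiset S) (γ : Γ) (t : S) :
    H.tri m.sum γ t = (m.map fun y => H.tri y γ t).sum := by
  induction m using Multiset.induction_on with
  | empty => simp [H.zero_left]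
  | cons b m ih => simp [H.add_left, ih]

lemma lAct_tri (u : Multiset (S × Γ)) (x : S) (γ : Γ) (t : S) :
    H.lAct u (H.tri x γ t) = H.tri (H.lAct u x) γ t := by
  unfold lAct
  rw [tri_sum_left, Multiset.map_map]
  exact congrArg Multiset.sum
    (Multiset.map_congr rfl fun p _ => H.tri_assoc p.1 p.2 x γ t)

lemma lAct_map_sum {α : Type} (u : Multiset (S × Γ)) (m : Multiset α) (f : α → S) :
    H.lAct u ((m.map f).sum) = (m.map fun x => H.lAct u (f x)).sum := by
  induction m using Multiset.induction_on with
  | empty => simp [lAct_arg_zero]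
  | cons b m ih => simp [lAct_arg_add, ih]

lemma lActQ_map_sum {α : Type} (l : H.LOp) (m : Multiset α) (f : α → S) :
    H.lActQ l ((m.map f).sum) = (m.map fun x => H.lActQ l (f x)).sum :=
  Quotient.inductionOn l fun u => H.lAct_map_sum u m f

lemma mk_single_zero (γ : Γ) : H.lMk {((0 : S), γ)} = 0 :=
  Quotient.sound fun t => by simp [lAct, H.zero_left]

lemma mk_single_add (a b : S) (γ : Γ) :
    H.lMk {(a + b, γ)} = H.lMk {(a, γ)} + H.lMk {(b, γ)} := by
  rw [mk_add]
  exact Quotient.sound fun t => by simp [lAct, H.add_left]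

lemma mk_single_tri (a : S) (γ : Γ) (x : S) (γ' : Γ) :
    H.lMk {(H.tri a γ x, γ')} = H.lMk {(a, γ)} * H.lMk {(x, γ')} := by
  rw [mk_mul]
  exact Quotient.sound fun t => by simp [lAct, lMul]

lemma mul_mk_single (l : H.LOp) (x : S) (γ : Γ) :
    l * H.lMk {(x, γ)} = H.lMk {(H.lActQ l x, γ)} := by
  refine Quotient.inductionOn l fun u => ?_
  show H.lMk (H.lMul u {(x, γ)}) = H.lMk {(H.lAct u x, γ)}
  refine Quotient.sound fun t => ?_
  show H.lAct (H.lMul u {(x, γ)}) t = H.lAct {(H.lAct u x, γ)} t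
  rw [lAct_mul, lAct_single, lAct_single, lAct_tri]

lemma mul_mk_sum (l : H.LOp) (m : Multiset S) (γ : Γ) :
    l * H.lMk (m.map fun s => (s, γ)) = H.lMk {((m.map (H.lActQ l)).sum, γ)} := by
  refine Quotient.inductionOn l fun u => ?_
  show H.lMk (H.lMul u (m.map fun s => (s, γ))) = H.lMk {((m.map (H.lAct u)).sum, γ)}
  refine Quotient.sound fun t => ?_
  show H.lAct (H.lMul u (m.map fun s => (s, γ))) t = H.lAct {((m.map (H.lAct u)).sum, γ)} t
  rw [lAct_mul, lAct_single]
  have h1 : H.lAct (m.map fun s => (s, γ)) t = (m.map fun s => H.tri s γ t).sum := by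
    simp [lAct, Multiset.map_map]
  rw [h1, lAct_map_sum]
  rw [tri_sum_left, Multiset.map_map]
  exact congrArg Multiset.sum (Multiset.map_congr rfl fun s _ => H.lAct_tri u s γ t)

lemma key_unity {E : Multiset (S × Γ)} (hE : H.IsLeftUnity E) (l : H.LOp) :
    H.lMk (E.map fun p => (H.lActQ l p.1, p.2)) = l := by
  refine Quotient.inductionOn l fun u => ?_
  show H.lMk (E.map fun p => (H.lAct u p.1, p.2)) = H.lMk u
  refine Quotient.sound fun t => ?_
  show H.lAct (E.map fun p => (H.lAct u p.1, p.2)) t = H.lAct u t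
  have h1 : H.lAct (E.map fun p => (H.lAct u p.1, p.2)) t
      = (E.map fun p => H.tri (H.lAct u p.1) p.2 t).sum := by
    simp [lAct, Multiset.map_map]
  rw [h1]
  have h2 : (E.map fun p => H.tri (H.lAct u p.1) p.2 t).sum
      = (E.map fun p => H.lAct u (H.tri p.1 p.2 t)).sum :=
    congrArg Multiset.sum (Multiset.map_congr rfl fun p _ => (H.lAct_tri u p.1 p.2 t).symm)
  rw [h2, ← H.lAct_map_sum u E fun p => H.tri p.1 p.2 t]
  have h3 : (E.map fun p => H.tri p.1 p.2 t).sum = H.lAct E t := rfl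
  rw [h3, hE t]

lemma multiset_sum_mem' {M : Type} [AddCommMonoid M] {I : Set M} (h0 : (0 : M) ∈ I)
    (hadd : ∀ a b, a ∈ I → b ∈ I → a + b ∈ I) (m : Multiset M)
    (hm : ∀ x ∈ m, x ∈ I) : m.sum ∈ I := by
  induction m using Multiset.induction_on with
  | empty => simpa using h0
  | cons b m ih =>
    rw [Multiset.sum_cons]
    exact hadd _ _ (hm b (Multiset.mem_cons_self b m))
      (ih fun x hx => hm x (Multiset.mem_cons_of_mem hx))

lemma mk_mem_of_singletons {J : Set H.LOp} (h0 : (0 : H.LOp) ∈ J)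
    (hadd : ∀ a b, a ∈ J → b ∈ J → a + b ∈ J) (v : Multiset (S × Γ))
    (hv : ∀ p ∈ v, H.lMk {p} ∈ J) : H.lMk v ∈ J := by
  induction v using Multiset.induction_on with
  | empty => exact h0
  | cons p v ih =>
    have h1 : H.lMk (p ::ₘ v) = H.lMk {p} + H.lMk v := by
      rw [mk_add, Multiset.singleton_add]
    rw [h1]
    exact hadd _ _ (hv p (Multiset.mem_cons_self p v))
      (ih fun q hq => hv q (Multiset.mem_cons_of_mem hq))

end GammaHemiring

/-- for `S` with left and right unities, `I ↦ I⁺′` is an inclusion-preserving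
bijection from the h-ideals of `S` onto the h-ideals of `L`, with inverse `J ↦ J⁺`. -/
theorem hIdeal_lattice_iso {S Γ : Type} [AddCommMonoid S] [AddCommMonoid Γ]
    (H : GammaHemiring S Γ)
    (E : Multiset (S × Γ)) (hE : H.IsLeftUnity E)
    (E' : Multiset (Γ × S)) (hE' : H.IsRightUnity E') :
    (∀ I : Set S, H.IsGHIdeal I → IsHIdeal (H.plusPrimeSet I)) ∧
    (∀ J : Set H.LOp, IsHIdeal J → H.IsGHIdeal (H.plusSet J)) ∧
    (∀ I : Set S, H.IsGHIdeal I → H.plusSet (H.plusPrimeSet I) = I) ∧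
    (∀ J : Set H.LOp, IsHIdeal J → H.plusPrimeSet (H.plusSet J) = J) ∧
    (∀ I₁ I₂ : Set S, H.IsGHIdeal I₁ → H.IsGHIdeal I₂ →
      (I₁ ⊆ I₂ ↔ H.plusPrimeSet I₁ ⊆ H.plusPrimeSet I₂)) := by
  -- Part 1
  have P1 : ∀ I : Set S, H.IsGHIdeal I → IsHIdeal (H.plusPrimeSet I) := by
    intro I hI
    obtain ⟨h0, hadd, habsL, habsR, hh⟩ := hI
    refine ⟨?_, ?_, ?_, ?_, ?_⟩
    · intro m hm
      have h1 : (m.map (H.lActQ 0)).sum = 0 := by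
        have : m.map (H.lActQ 0) = m.map fun _ => (0 : S) :=
          Multiset.map_congr rfl fun x _ => H.lActQ_zero x
        rw [this, Multiset.sum_map_zero]
      rw [h1]; exact h0
    · intro a b ha hb m hm
      have h1 : (m.map (H.lActQ (a + b))).sum
          = (m.map (H.lActQ a)).sum + (m.map (H.lActQ b)).sum := by
        rw [← Multiset.sum_map_add]
        exact congrArg Multiset.sum (Multiset.map_congr rfl fun s _ => H.lActQ_add a b s)
      rw [h1]; exact hadd _ _ (ha m hm) (hb m hm)
    · intro a l ha m hm
      have h1 : (m.map (H.lActQ (l * a))).sum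
          = H.lActQ l ((m.map (H.lActQ a)).sum) := by
        rw [H.lActQ_map_sum l m (H.lActQ a)]
        exact congrArg Multiset.sum (Multiset.map_congr rfl fun s _ => H.lActQ_mul l a s)
      rw [h1]
      refine Quotient.inductionOn l fun u => ?_
      exact GammaHemiring.multiset_sum_mem' h0 hadd _ (fun x hx => by
        obtain ⟨p, _, rfl⟩ := Multiset.mem_map.1 hx
        exact habsR _ p.2 p.1 (ha m hm))
    · intro a l ha m hm
      have h1 : (m.map (H.lActQ (a * l))).sum
          = ((m.map (H.lActQ l)).map (H.lActQ a)).sum := by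
        rw [Multiset.map_map]
        exact congrArg Multiset.sum (Multiset.map_congr rfl fun s _ => H.lActQ_mul a l s)
      rw [h1]
      exact ha _ (by simpa [Multiset.map_eq_zero] using hm)
    · intro x a b z hxz ha hb m hm
      have hAadd : ∀ l l' : H.LOp, (m.map (H.lActQ (l + l'))).sum
          = (m.map (H.lActQ l)).sum + (m.map (H.lActQ l')).sum := fun l l' => by
        rw [← Multiset.sum_map_add]
        exact congrArg Multiset.sum (Multiset.map_congr rfl fun s _ => H.lActQ_add l l' s)
      refine hh _ _ _ ((m.map (H.lActQ z)).sum) ?_ (ha m hm) (hb m hm)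
      calc (m.map (H.lActQ x)).sum + (m.map (H.lActQ a)).sum + (m.map (H.lActQ z)).sum
          = (m.map (H.lActQ (x + a + z))).sum := by rw [hAadd, hAadd]
        _ = (m.map (H.lActQ (b + z))).sum := by rw [hxz]
        _ = (m.map (H.lActQ b)).sum + (m.map (H.lActQ z)).sum := hAadd b z
  -- Part 2
  have P2 : ∀ J : Set H.LOp, IsHIdeal J → H.IsGHIdeal (H.plusSet J) := by
    intro J hJ
    obtain ⟨h0, hadd, hL, hR, hh⟩ := hJ
    refine ⟨?_, ?_, ?_, ?_, ?_⟩
    · intro γ; rw [H.mk_single_zero γ]; exact h0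
    · intro a b ha hb γ; rw [H.mk_single_add a b γ]; exact hadd _ _ (ha γ) (hb γ)
    · intro a γ x ha γ'; rw [H.mk_single_tri a γ x γ']; exact hR _ _ (ha γ)
    · intro a γ x ha γ'; rw [H.mk_single_tri x γ a γ']; exact hL _ _ (ha γ')
    · intro x a b z hx ha hb γ
      refine hh _ _ _ (H.lMk {(z, γ)}) ?_ (ha γ) (hb γ)
      calc H.lMk {(x, γ)} + H.lMk {(a, γ)} + H.lMk {(z, γ)}
          = H.lMk {(x + a + z, γ)} := by rw [H.mk_single_add (x + a) z, H.mk_single_add x a]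
        _ = H.lMk {(b + z, γ)} := by rw [hx]
        _ = H.lMk {(b, γ)} + H.lMk {(z, γ)} := H.mk_single_add b z γ
  -- Part 3
  have P3 : ∀ I : Set S, H.IsGHIdeal I → H.plusSet (H.plusPrimeSet I) = I := by
    intro I hI
    ext a
    constructor
    · intro ha
      have key : ∀ γ s, H.tri a γ s ∈ I := by
        intro γ s
        have h1 := ha γ ({s} : Multiset S) (by simp)
        simpa [H.lActQ_mk, H.lAct_single] using h1
      have h2 := hE' a
      rw [← h2]
      refine GammaHemiring.multiset_sum_mem' hI.1 hI.2.1 _ (fun x hx => ?_)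
      obtain ⟨p, _, rfl⟩ := Multiset.mem_map.1 hx
      exact key p.1 p.2
    · intro ha γ m hm
      refine GammaHemiring.multiset_sum_mem' hI.1 hI.2.1 _ (fun x hx => ?_)
      obtain ⟨s, _, rfl⟩ := Multiset.mem_map.1 hx
      have h1 : H.lActQ (H.lMk {(a, γ)}) s = H.tri a γ s := by
        rw [H.lActQ_mk, H.lAct_single]
      rw [h1]
      exact hI.2.2.1 a γ s ha
  -- Part 4
  have P4 : ∀ J : Set H.LOp, IsHIdeal J → H.plusPrimeSet (H.plusSet J) = J := by
    intro J hJ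
    obtain ⟨h0, hadd, hL, hR, hh⟩ := hJ
    ext l
    constructor
    · intro hl
      rw [← H.key_unity hE l]
      refine H.mk_mem_of_singletons h0 hadd _ (fun p hp => ?_)
      obtain ⟨q, _, rfl⟩ := Multiset.mem_map.1 hp
      have h1 := hl ({q.1} : Multiset S) (by simp) q.2
      simpa using h1
    · intro hl m hm γ
      have h1 := H.mul_mk_sum l m γ
      rw [← h1]
      exact hR _ _ hl
  -- Part 5
  refine ⟨P1, P2, P3, P4, ?_⟩
  intro I₁ I₂ h1 h2
  constructor
  · intro hsub l hl m hm; exact hsub (hl m hm)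
  · intro hsub a ha
    have h3 : a ∈ H.plusSet (H.plusPrimeSet I₁) := by rw [P3 I₁ h1]; exact ha
    have h4 : a ∈ H.plusSet (H.plusPrimeSet I₂) := fun γ => hsub (h3 γ)
    rw [P3 I₂ h2] at h4
    exact h4
end

section
/- If ζ is a prime fuzzy h-ideal of a Γ-hemiring S (with left and right unities), then ζ⁺′ is a prime fuzzy h-ideal of the left operator hemiring L. -/
open scoped Classical

/-- An expression `x + aγb + z = cδd + z` in a `Γ`-hemiring. -/
structure GammaHemiring.SExprG {S Γ : Type} [AddCommMonoid S] [AddCommMonoid Γ]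
    (H : GammaHemiring S Γ) (x : S) : Type where
  a : S
  g : Γ
  b : S
  c : S
  e : Γ
  d : S
  z : S
  eq : x + H.tri a g b + z = H.tri c e d + z

/-- The simple h-product of fuzzy subsets of a `Γ`-hemiring. -/
noncomputable def GammaHemiring.sProdG {S Γ : Type} [AddCommMonoid S] [AddCommMonoid Γ]
    (H : GammaHemiring S Γ) (μ ν : S → unitInterval) (x : S) : unitInterval :=
  ⨆ e : H.SExprG x, (μ e.a ⊓ μ e.c) ⊓ (ν e.b ⊓ ν e.d)

/-- An expression `x + ab + z = cd + z` in a hemiring. -/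
structure SExprH (T : Type) [NonUnitalSemiring T] (x : T) : Type where
  a : T
  b : T
  c : T
  d : T
  z : T
  eq : x + a * b + z = c * d + z

/-- The simple h-product of fuzzy subsets of a hemiring. -/
noncomputable def sProdH {T : Type} [NonUnitalSemiring T] (μ ν : T → unitInterval)
    (x : T) : unitInterval :=
  ⨆ e : SExprH T x, (μ e.a ⊓ μ e.c) ⊓ (ν e.b ⊓ ν e.d)
/-- A prime fuzzy h-ideal of a `Γ`-hemiring: a non-constant fuzzy h-ideal `ζ` such that
`μ Γ_h ν ⊆ ζ` implies `μ ⊆ ζ` or `ν ⊆ ζ` for fuzzy h-ideals `μ`, `ν`. -/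
def GammaHemiring.IsPrimeGFuzzyHIdeal {S Γ : Type} [AddCommMonoid S] [AddCommMonoid Γ]
    (H : GammaHemiring S Γ) (ζ : S → unitInterval) : Prop :=
  H.IsGFuzzyHIdeal ζ ∧ (∃ x y, ζ x ≠ ζ y) ∧
  ∀ μ ν : S → unitInterval, H.IsGFuzzyHIdeal μ → H.IsGFuzzyHIdeal ν →
    H.sProdG μ ν ≤ ζ → μ ≤ ζ ∨ ν ≤ ζ

/-- A prime fuzzy h-ideal of a hemiring. -/
def IsPrimeFuzzyHIdeal {T : Type} [NonUnitalSemiring T] (ζ : T → unitInterval) : Prop :=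
  IsFuzzyHIdeal ζ ∧ (∃ x y, ζ x ≠ ζ y) ∧
  ∀ μ ν : T → unitInterval, IsFuzzyHIdeal μ → IsFuzzyHIdeal ν →
    sProdH μ ν ≤ ζ → μ ≤ ζ ∨ ν ≤ ζ

namespace GammaHemiring

variable {S Γ : Type} [AddCommMonoid S] [AddCommMonoid Γ] (H : GammaHemiring S Γ)

lemma aux_tri_sum_left (m : Multiset S) (γ : Γ) (a : S) :
    H.tri m.sum γ a = (m.map fun x => H.tri x γ a).sum := by
  induction m using Multiset.induction_on with
  | empty => simp [H.zero_left]
  | cons b m ih => simp [H.add_left, ih]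

lemma aux_lAct_singleton (x : S) (γ : Γ) (s : S) :
    H.lAct {(x, γ)} s = H.tri x γ s := by simp [lAct]

lemma aux_single_mul (x : S) (γ : Γ) (y : S) (δ : Γ) :
    H.lMk {(x, γ)} * H.lMk {(y, δ)} = H.lMk {(H.tri x γ y, δ)} := by
  rw [mk_mul]
  have h : H.lMul {(x, γ)} {(y, δ)} = {(H.tri x γ y, δ)} := by simp [lMul]
  rw [h]

lemma aux_mk_mul_single (u : Multiset (S × Γ)) (s : S) (γ : Γ) :
    H.lMk u * H.lMk {(s, γ)} = H.lMk {(H.lAct u s, γ)} := by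
  rw [mk_mul]
  refine Quotient.sound fun a => ?_
  rw [lAct_mul, aux_lAct_singleton, aux_lAct_singleton]
  unfold lAct
  rw [aux_tri_sum_left, Multiset.map_map]
  congr 1
  refine Multiset.map_congr rfl fun p _ => ?_
  simp [Function.comp, H.tri_assoc]

variable {ζ : S → unitInterval}

lemma aux_zero_ge (hζ : H.IsGFuzzyHIdeal ζ) (a : S) : ζ a ≤ ζ 0 := by
  have := hζ.2.2 0 a a 0 (by simp)
  simpa using this

lemma aux_sum_ge (hζ : H.IsGFuzzyHIdeal ζ) {T : unitInterval} :
    ∀ m : Multiset S, m ≠ 0 → (∀ b ∈ m, T ≤ ζ b) → T ≤ ζ m.sum := by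
  intro m
  induction m using Multiset.induction_on with
  | empty => intro hm _; exact absurd rfl hm
  | cons b m ih =>
    intro _ h
    rcases eq_or_ne m 0 with rfl | hm0
    · simpa using h b (by simp)
    · have h1 : T ≤ ζ b := h b (by simp)
      have h2 : T ≤ ζ m.sum := ih hm0 fun c hc => h c (by simp [hc])
      calc T ≤ ζ b ⊓ ζ m.sum := le_inf h1 h2
        _ ≤ ζ (b + m.sum) := hζ.1 b m.sum
        _ = ζ (b ::ₘ m).sum := by rw [Multiset.sum_cons]

lemma aux_sum_gt (hζ : H.IsGFuzzyHIdeal ζ) {T : unitInterval} :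
    ∀ m : Multiset S, m ≠ 0 → (∀ b ∈ m, T < ζ b) → T < ζ m.sum := by
  intro m
  induction m using Multiset.induction_on with
  | empty => intro hm _; exact absurd rfl hm
  | cons b m ih =>
    intro _ h
    rcases eq_or_ne m 0 with rfl | hm0
    · simpa using h b (by simp)
    · have h1 : T < ζ b := h b (by simp)
      have h2 : T < ζ m.sum := ih hm0 fun c hc => h c (by simp [hc])
      calc T < ζ b ⊓ ζ m.sum := lt_inf_iff.mpr ⟨h1, h2⟩
        _ ≤ ζ (b + m.sum) := hζ.1 b m.sum
        _ = ζ (b ::ₘ m).sum := by rw [Multiset.sum_cons]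

lemma aux_act_ge (hζ : H.IsGFuzzyHIdeal ζ) (u : Multiset (S × Γ)) (t : S) :
    ζ t ≤ ζ (H.lAct u t) := by
  induction u using Multiset.induction_on with
  | empty => simpa [lAct] using H.aux_zero_ge hζ t
  | cons p u ih =>
    have h1 : ζ t ≤ ζ (H.tri p.1 p.2 t) := le_sup_right.trans (hζ.2.1 p.1 p.2 t)
    have he : H.lAct (p ::ₘ u) t = H.tri p.1 p.2 t + H.lAct u t := by simp [lAct]
    rw [he]
    exact (le_inf h1 ih).trans (hζ.1 _ _)

lemma aux_plusPrime_ideal (hζ : H.IsGFuzzyHIdeal ζ) : IsFuzzyHIdeal (H.plusPrime ζ) := by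
  refine ⟨?_, ?_, ?_⟩
  · intro A B
    refine Quotient.inductionOn₂ A B fun u v => ?_
    show (⨅ s, ζ (H.lAct u s)) ⊓ (⨅ s, ζ (H.lAct v s)) ≤ ⨅ s, ζ (H.lAct (u + v) s)
    refine le_iInf fun s => ?_
    calc (⨅ s, ζ (H.lAct u s)) ⊓ (⨅ s, ζ (H.lAct v s))
        ≤ ζ (H.lAct u s) ⊓ ζ (H.lAct v s) := inf_le_inf (iInf_le _ s) (iInf_le _ s)
      _ ≤ ζ (H.lAct u s + H.lAct v s) := hζ.1 _ _
      _ = ζ (H.lAct (u + v) s) := by rw [lAct_add]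
  · intro A B
    refine Quotient.inductionOn₂ A B fun u v => ?_
    show (⨅ s, ζ (H.lAct u s)) ⊔ (⨅ s, ζ (H.lAct v s)) ≤ ⨅ s, ζ (H.lAct (H.lMul u v) s)
    refine le_iInf fun s => ?_
    rw [lAct_mul]
    refine sup_le (iInf_le _ _) ?_
    exact (iInf_le _ s).trans (H.aux_act_ge hζ u (H.lAct v s))
  · intro X A B Z
    refine Quotient.inductionOn X fun ux => Quotient.inductionOn A fun ua =>
      Quotient.inductionOn B fun ub => Quotient.inductionOn Z fun uz h => ?_
    have hs : ∀ s, H.lAct (ux + ua + uz) s = H.lAct (ub + uz) s := Quotient.exact h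
    show (⨅ s, ζ (H.lAct ua s)) ⊓ (⨅ s, ζ (H.lAct ub s)) ≤ ⨅ s, ζ (H.lAct ux s)
    refine le_iInf fun s => ?_
    have heq : H.lAct ux s + H.lAct ua s + H.lAct uz s = H.lAct ub s + H.lAct uz s := by
      have := hs s
      simpa [lAct_add] using this
    exact (inf_le_inf (iInf_le _ s) (iInf_le _ s)).trans (hζ.2.2 _ _ _ _ heq)

lemma aux_plusMap_ideal {μ : H.LOp → unitInterval} (hμ : IsFuzzyHIdeal μ) :
    H.IsGFuzzyHIdeal (H.plusMap μ) := by
  refine ⟨?_, ?_, ?_⟩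
  · intro x y
    refine le_iInf fun γ => ?_
    have heq : H.lMk {(x + y, γ)} = H.lMk {(x, γ)} + H.lMk {(y, γ)} := by
      rw [mk_add]
      exact Quotient.sound fun s => by simp [lAct, H.add_left]
    rw [heq]
    exact (inf_le_inf (iInf_le _ γ) (iInf_le _ γ)).trans (hμ.1 _ _)
  · intro x γ y
    refine le_iInf fun δ => ?_
    rw [← aux_single_mul]
    exact (sup_le_sup (iInf_le _ γ) (iInf_le _ δ)).trans (hμ.2.1 _ _)
  · intro x a b z h
    refine le_iInf fun γ => ?_
    have heq : H.lMk {(x, γ)} + H.lMk {(a, γ)} + H.lMk {(z, γ)}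
        = H.lMk {(b, γ)} + H.lMk {(z, γ)} := by
      rw [mk_add, mk_add, mk_add]
      refine Quotient.sound fun s => ?_
      have := congrArg (fun w => H.tri w γ s) h
      simpa [lAct, H.add_left, add_assoc] using this
    exact (inf_le_inf (iInf_le _ γ) (iInf_le _ γ)).trans (hμ.2.2 _ _ _ _ heq)

lemma aux_le_plusPrime_plusMap {μ : H.LOp → unitInterval} (hμ : IsFuzzyHIdeal μ) :
    μ ≤ H.plusPrime (H.plusMap μ) := by
  intro A
  refine Quotient.inductionOn A fun u => ?_
  show μ (H.lMk u) ≤ ⨅ s, ⨅ γ, μ (H.lMk {(H.lAct u s, γ)})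
  refine le_iInf fun s => le_iInf fun γ => ?_
  rw [← aux_mk_mul_single]
  exact le_sup_left.trans (hμ.2.1 _ _)

lemma aux_plusPrime_mono {σ τ : S → unitInterval} (h : σ ≤ τ) :
    H.plusPrime σ ≤ H.plusPrime τ := fun A =>
  Quotient.inductionOn A fun _ => iInf_mono fun _ => h _

end GammaHemiring

/-- if `ζ` is a prime fuzzy h-ideal of `S` (with left and right unities),
then `ζ⁺′` is a prime fuzzy h-ideal of `L`. -/
theorem plusPrime_prime {S Γ : Type} [AddCommMonoid S] [AddCommMonoid Γ]
    (H : GammaHemiring S Γ)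
    (E : Multiset (S × Γ)) (hE : H.IsLeftUnity E)
    (E' : Multiset (Γ × S)) (hE' : H.IsRightUnity E')
    (ζ : S → unitInterval) (hζ : H.IsPrimeGFuzzyHIdeal ζ) :
    IsPrimeFuzzyHIdeal (H.plusPrime ζ) := by
  haveI : Nonempty S := ⟨0⟩
  haveI : Nonempty Γ := ⟨0⟩
  obtain ⟨hζi, ⟨x0, y0, hxy⟩, hζp⟩ := hζ
  have hE'ne : E' ≠ 0 := by
    intro h
    subst h
    have hx := hE' x0
    have hy := hE' y0
    simp at hx hy
    exact hxy (by rw [← hx, ← hy])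
  refine ⟨H.aux_plusPrime_ideal hζi, ?_, ?_⟩
  · -- non-constant
    have hle0 : ∀ a, ζ a ≤ ζ 0 := H.aux_zero_ge hζi
    obtain ⟨t, ht⟩ : ∃ t, ζ t < ζ 0 := by
      rcases eq_or_ne (ζ x0) (ζ 0) with h | h
      · exact ⟨y0, (hle0 y0).lt_of_ne fun hy => hxy (h.trans hy.symm)⟩
      · exact ⟨x0, (hle0 x0).lt_of_ne h⟩
    obtain ⟨p, hp, hpt⟩ : ∃ p ∈ E', ζ (H.tri t p.1 p.2) ≤ ζ t := by
      by_contra hc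
      push_neg at hc
      have hgt := H.aux_sum_gt hζi (E'.map fun p => H.tri t p.1 p.2)
        (by simpa using hE'ne)
        (fun b hb => by
          obtain ⟨q, hq, rfl⟩ := Multiset.mem_map.mp hb
          exact hc q hq)
      rw [hE' t] at hgt
      exact lt_irrefl _ hgt
    refine ⟨H.lMk {(t, p.1)}, 0, ne_of_lt ?_⟩
    have h0 : H.plusPrime ζ (0 : H.LOp) = ζ 0 := by
      show (⨅ s : S, ζ (H.lAct 0 s)) = ζ 0
      simp [GammaHemiring.lAct_zero]
    rw [h0]
    calc H.plusPrime ζ (H.lMk {(t, p.1)})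
        ≤ ζ (H.lAct {(t, p.1)} p.2) := iInf_le _ p.2
      _ = ζ (H.tri t p.1 p.2) := by rw [H.aux_lAct_singleton]
      _ ≤ ζ t := hpt
      _ < ζ 0 := ht
  · -- primeness
    intro μ ν hμ hν hle
    have hkey : H.sProdG (H.plusMap μ) (H.plusMap ν) ≤ ζ := by
      intro x
      refine iSup_le fun e => ?_
      set T := (H.plusMap μ e.a ⊓ H.plusMap μ e.c) ⊓ (H.plusMap ν e.b ⊓ H.plusMap ν e.d)
        with hT
      have hterm : ∀ p ∈ E', T ≤ ζ (H.tri x p.1 p.2) := by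
        intro p hp
        have h1 : H.plusPrime ζ (H.lMk {(x, p.1)}) ≤ ζ (H.tri x p.1 p.2) := by
          have := iInf_le (fun s => ζ (H.lAct {(x, p.1)} s)) p.2
          rw [H.aux_lAct_singleton] at this
          exact this
        refine le_trans (le_trans ?_ (hle _)) h1
        have heq : H.lMk {(x, p.1)} + H.lMk {(e.a, e.g)} * H.lMk {(e.b, p.1)}
            + H.lMk {(e.z, p.1)}
            = H.lMk {(e.c, e.e)} * H.lMk {(e.d, p.1)} + H.lMk {(e.z, p.1)} := by
          rw [H.aux_single_mul, H.aux_single_mul, GammaHemiring.mk_add,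
            GammaHemiring.mk_add, GammaHemiring.mk_add]
          refine Quotient.sound fun s => ?_
          have h2 := congrArg (fun w => H.tri w p.1 s) e.eq
          simpa [GammaHemiring.lAct, H.add_left, add_assoc] using h2
        refine le_trans ?_
          (le_iSup (fun w : SExprH H.LOp (H.lMk {(x, p.1)}) =>
            (μ w.a ⊓ μ w.c) ⊓ (ν w.b ⊓ ν w.d))
            ⟨H.lMk {(e.a, e.g)}, H.lMk {(e.b, p.1)}, H.lMk {(e.c, e.e)},
              H.lMk {(e.d, p.1)}, H.lMk {(e.z, p.1)}, heq⟩)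
        exact inf_le_inf (inf_le_inf (iInf_le _ _) (iInf_le _ _))
          (inf_le_inf (iInf_le _ _) (iInf_le _ _))
      have hsum := H.aux_sum_ge hζi (E'.map fun p => H.tri x p.1 p.2)
        (by simpa using hE'ne)
        (fun b hb => by
          obtain ⟨q, hq, rfl⟩ := Multiset.mem_map.mp hb
          exact hterm q hq)
      rw [hE' x] at hsum
      exact hsum
    rcases hζp _ _ (H.aux_plusMap_ideal hμ) (H.aux_plusMap_ideal hν) hkey with h | h
    · exact Or.inl ((H.aux_le_plusPrime_plusMap hμ).trans (H.aux_plusPrime_mono h))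
    · exact Or.inr ((H.aux_le_plusPrime_plusMap hν).trans (H.aux_plusPrime_mono h))
end

section
/- If μ is a fuzzy h-bi-ideal of a Γ-hemiring S (with left and right unities), then μ⁺′ is a fuzzy h-bi-ideal of the left operator hemiring L. -/
open scoped Classical

/-- A fuzzy h-bi-ideal of a `Γ`-hemiring. -/
def GammaHemiring.IsGFuzzyHBiIdeal {S Γ : Type} [AddCommMonoid S] [AddCommMonoid Γ]
    (H : GammaHemiring S Γ) (μ : S → unitInterval) : Prop :=
  (∀ x y, μ x ⊓ μ y ≤ μ (x + y)) ∧
  (∀ x γ y, μ x ⊓ μ y ≤ μ (H.tri x γ y)) ∧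
  (∀ x α y β z, μ x ⊓ μ z ≤ μ (H.tri (H.tri x α y) β z)) ∧
  (∀ x a b z, x + a + z = b + z → μ a ⊓ μ b ≤ μ x)

/-- A fuzzy h-bi-ideal of a hemiring. -/
def IsFuzzyHBiIdeal {T : Type} [NonUnitalSemiring T] (μ : T → unitInterval) : Prop :=
  (∀ x y, μ x ⊓ μ y ≤ μ (x + y)) ∧
  (∀ x y, μ x ⊓ μ y ≤ μ (x * y)) ∧
  (∀ x y z, μ x ⊓ μ z ≤ μ (x * y * z)) ∧
  (∀ x a b z, x + a + z = b + z → μ a ⊓ μ b ≤ μ x)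

/-- if `μ` is a fuzzy h-bi-ideal of `S` (with left and right unities), then
`μ⁺′` is a fuzzy h-bi-ideal of `L`. -/
theorem plusPrime_biIdeal {S Γ : Type} [AddCommMonoid S] [AddCommMonoid Γ]
    (H : GammaHemiring S Γ)
    (E : Multiset (S × Γ)) (hE : H.IsLeftUnity E)
    (E' : Multiset (Γ × S)) (hE' : H.IsRightUnity E')
    (μ : S → unitInterval) (hμ : H.IsGFuzzyHBiIdeal μ) :
    IsFuzzyHBiIdeal (H.plusPrime μ) := by
  obtain ⟨h1, h2, h3, h4⟩ := hμ
  refine ⟨?_, ?_, ?_, ?_⟩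
  · intro x y
    refine Quotient.inductionOn₂ x y fun u v => ?_
    show (⨅ s : S, μ (H.lAct u s)) ⊓ (⨅ s : S, μ (H.lAct v s)) ≤
      ⨅ s : S, μ (H.lAct (u + v) s)
    refine le_iInf fun s => ?_
    rw [H.lAct_add]
    exact le_trans (inf_le_inf (iInf_le _ s) (iInf_le _ s)) (h1 _ _)
  · intro x y
    refine Quotient.inductionOn₂ x y fun u v => ?_
    show (⨅ s : S, μ (H.lAct u s)) ⊓ (⨅ s : S, μ (H.lAct v s)) ≤
      ⨅ s : S, μ (H.lAct (H.lMul u v) s)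
    refine le_iInf fun s => ?_
    rw [H.lAct_mul]
    exact le_trans inf_le_left (iInf_le _ (H.lAct v s))
  · intro x y z
    refine Quotient.inductionOn₃ x y z fun u v w => ?_
    show (⨅ s : S, μ (H.lAct u s)) ⊓ (⨅ s : S, μ (H.lAct w s)) ≤
      ⨅ s : S, μ (H.lAct (H.lMul (H.lMul u v) w) s)
    refine le_iInf fun s => ?_
    rw [H.lAct_mul, H.lAct_mul]
    exact le_trans inf_le_left (iInf_le _ (H.lAct v (H.lAct w s)))
  · intro x a b z heq
    induction x using Quotient.inductionOn with | _ u =>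
    induction a using Quotient.inductionOn with | _ v =>
    induction b using Quotient.inductionOn with | _ w =>
    induction z using Quotient.inductionOn with | _ t =>
    have hpt : ∀ s : S, H.lAct u s + H.lAct v s + H.lAct t s
        = H.lAct w s + H.lAct t s := by
      intro s
      have := Quotient.exact heq s
      simpa [H.lAct_add] using this
    show (⨅ s : S, μ (H.lAct v s)) ⊓ (⨅ s : S, μ (H.lAct w s)) ≤
      ⨅ s : S, μ (H.lAct u s)
    refine le_iInf fun s => ?_
    exact le_trans (inf_le_inf (iInf_le _ s) (iInf_le _ s)) (h4 _ _ _ _ (hpt s))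
end

section
/- For fuzzy subsets μ and σ of the right operator hemiring R of a Γ-hemiring S, (μ × σ)* = μ* × σ*, where for a fuzzy subset δ of R, δ*(x) = inf_{γ∈Γ} δ([γ,x]), and (μ×σ)*(x,y) = inf_{α,β∈Γ} (μ×σ)([α,x],[β,y]). -/
open scoped Classical

namespace GammaHemiring

variable {S Γ : Type} [AddCommMonoid S] [AddCommMonoid Γ] (H : GammaHemiring S Γ)

/-- Right action of a formal sum `Σ (γᵢ, xᵢ)` on an element of `S`. -/
def rAct (u : Multiset (Γ × S)) (a : S) : S := (u.map fun p => H.tri a p.1 p.2).sum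

/-- The defining congruence of the right operator hemiring. -/
def rSetoid : Setoid (Multiset (Γ × S)) where
  r u v := ∀ a, H.rAct u a = H.rAct v a
  iseqv := ⟨fun _ _ => rfl, fun h a => (h a).symm, fun h1 h2 a => (h1 a).trans (h2 a)⟩

/-- The right operator hemiring `R` of a `Γ`-hemiring `S`. -/
def ROp := Quotient H.rSetoid

/-- Multiplication of formal sums: `(Σ[αᵢ,xᵢ])(Σ[βⱼ,yⱼ]) = Σ[αᵢ, xᵢβⱼyⱼ]`. -/
def rMul (u v : Multiset (Γ × S)) : Multiset (Γ × S) :=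
  u.bind fun p => v.map fun q => (p.1, H.tri p.2 q.1 q.2)

lemma rAct_add (u v : Multiset (Γ × S)) (a : S) :
    H.rAct (u + v) a = H.rAct u a + H.rAct v a := by
  simp [rAct]

lemma rAct_zero (a : S) : H.rAct 0 a = 0 := by simp [rAct]

lemma rAct_arg_add (u : Multiset (Γ × S)) (b c : S) :
    H.rAct u (b + c) = H.rAct u b + H.rAct u c := by
  simp only [rAct, H.add_left]
  rw [← Multiset.sum_map_add]

lemma rAct_arg_zero (u : Multiset (Γ × S)) : H.rAct u 0 = 0 := by
  simp [rAct, H.zero_left]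

lemma sum_tri (m : Multiset S) (α : Γ) (x : S) :
    H.tri m.sum α x = (m.map fun b => H.tri b α x).sum := by
  induction m using Multiset.induction_on with
  | empty => simp [H.zero_left]
  | cons b m ih => simp [H.add_left, ih]

lemma multiset_sum_swap {α β M : Type} [AddCommMonoid M] (m : Multiset α) (n : Multiset β)
    (f : α → β → M) :
    (m.map fun a => (n.map fun b => f a b).sum).sum
      = (n.map fun b => (m.map fun a => f a b).sum).sum := by
  induction m using Multiset.induction_on with
  | empty => simp
  | cons a m ih => simp [ih, Multiset.sum_map_add]

lemma rAct_mul (u v : Multiset (Γ × S)) (a : S) :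
    H.rAct (H.rMul u v) a = H.rAct v (H.rAct u a) := by
  unfold rAct rMul
  rw [Multiset.map_bind, Multiset.sum_bind]
  simp only [Multiset.map_map, Function.comp]
  rw [multiset_sum_swap]
  refine congrArg _ (Multiset.map_congr rfl ?_)
  intro q _
  rw [sum_tri, Multiset.map_map]
  refine congrArg _ (Multiset.map_congr rfl ?_)
  intro p _
  simp [Function.comp, H.tri_assoc]

noncomputable instance : Add H.ROp :=
  ⟨Quotient.map₂ (· + ·) (fun {u u'} hu {v v'} hv a => by
    rw [rAct_add, rAct_add, hu a, hv a])⟩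

noncomputable instance : Zero H.ROp := ⟨Quotient.mk H.rSetoid 0⟩

noncomputable instance : Mul H.ROp :=
  ⟨Quotient.map₂ H.rMul (fun {u u'} hu {v v'} hv a => by
    rw [rAct_mul, rAct_mul, hu a, hv (H.rAct u' a)])⟩

/-- The right operator hemiring structure. -/
noncomputable instance : NonUnitalSemiring H.ROp where
  add := (· + ·)
  zero := 0
  mul := (· * ·)
  nsmul := nsmulRec
  nsmul_zero := fun _ => rfl
  nsmul_succ := fun _ _ => rfl
  add_assoc a b c := Quotient.inductionOn₃ a b c fun u v w =>
    congrArg (Quotient.mk _) (add_assoc u v w)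
  zero_add a := Quotient.inductionOn a fun u => congrArg (Quotient.mk _) (zero_add u)
  add_zero a := Quotient.inductionOn a fun u => congrArg (Quotient.mk _) (add_zero u)
  add_comm a b := Quotient.inductionOn₂ a b fun u v => congrArg (Quotient.mk _) (add_comm u v)
  left_distrib a b c := Quotient.inductionOn₃ a b c fun u v w => Quotient.sound fun s => by
    simp [rAct_mul, rAct_add]
  right_distrib a b c := Quotient.inductionOn₃ a b c fun u v w => Quotient.sound fun s => by
    simp [rAct_mul, rAct_add, rAct_arg_add]
  zero_mul a := Quotient.inductionOn a fun u => Quotient.sound fun s => by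
    simp [rAct_mul, rAct_zero, rAct_arg_zero]
  mul_zero a := Quotient.inductionOn a fun u => Quotient.sound fun s => by
    simp [rAct_mul, rAct_zero]
  mul_assoc a b c := Quotient.inductionOn₃ a b c fun u v w => Quotient.sound fun s => by
    simp [rAct_mul]

/-- The class of a formal sum in `R`. -/
def rMk (u : Multiset (Γ × S)) : H.ROp := Quotient.mk H.rSetoid u

/-- Action of an element of `R` on `S`. -/
def rActQ : H.ROp → S → S := Quotient.lift H.rAct (fun _ _ h => funext h)

/-- For a fuzzy subset `δ` of `R`, the fuzzy subset `δ*` of `S`, `δ*(x) = inf_γ δ([γ,x])`. -/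
noncomputable def starMap (μ : H.ROp → unitInterval) (x : S) : unitInterval :=
  ⨅ γ : Γ, μ (H.rMk {(γ, x)})

/-- For a fuzzy subset `η` of `S`, the fuzzy subset `η*′` of `R`,
`η*′(Σᵢ[αᵢ,xᵢ]) = inf_s η(Σᵢ sαᵢxᵢ)`. -/
noncomputable def starPrime (η : S → unitInterval) : H.ROp → unitInterval :=
  Quotient.lift (fun u => ⨅ s : S, η (H.rAct u s))
    (fun u v h => iInf_congr fun s => by rw [h s])

end GammaHemiring
/-- for fuzzy subsets `μ`, `σ` of `R`, `(μ × σ)* = μ* × σ*`. -/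
theorem starMap_prod {S Γ : Type} [AddCommMonoid S] [AddCommMonoid Γ]
    (H : GammaHemiring S Γ) (μ σ : H.ROp → unitInterval) :
    (fun p : S × S => ⨅ q : Γ × Γ, (μ (H.rMk {(q.1, p.1)}) ⊓ σ (H.rMk {(q.2, p.2)})))
      = fun p : S × S => H.starMap μ p.1 ⊓ H.starMap σ p.2 := by
  funext p
  rw [GammaHemiring.starMap, GammaHemiring.starMap, iInf_prod, iInf_inf]
  refine iInf_congr fun a => ?_
  show ⨅ j : Γ, μ (H.rMk {(a, p.1)}) ⊓ σ (H.rMk {(j, p.2)})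
      = μ (H.rMk {(a, p.1)}) ⊓ ⨅ γ : Γ, σ (H.rMk {(γ, p.2)})
  exact inf_iInf.symm
end

section
/- For fuzzy subsets μ and σ of a Γ-hemiring S, (μ × σ)*′ = μ*′ × σ*′ as fuzzy subsets of R × R, where μ*′(Σᵢ[αᵢ,xᵢ]) = inf_{s∈S} μ(Σᵢ sαᵢxᵢ) and (μ×σ)*′(Σᵢ[αᵢ,xᵢ], Σⱼ[βⱼ,yⱼ]) = inf_{s,s′∈S} (μ×σ)(Σᵢ sαᵢxᵢ, Σⱼ s′βⱼyⱼ). -/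
open scoped Classical

/-- for fuzzy subsets `μ`, `σ` of `S`, `(μ × σ)*′ = μ*′ × σ*′`. -/
theorem starPrime_prod {S Γ : Type} [AddCommMonoid S] [AddCommMonoid Γ]
    (H : GammaHemiring S Γ) (μ σ : S → unitInterval) :
    (fun l : H.ROp × H.ROp =>
        ⨅ q : S × S, (μ (H.rActQ l.1 q.1) ⊓ σ (H.rActQ l.2 q.2)))
      = fun l : H.ROp × H.ROp => H.starPrime μ l.1 ⊓ H.starPrime σ l.2 := by
  funext l
  obtain ⟨a, b⟩ := l
  refine Quotient.inductionOn₂ a b fun u v => ?_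
  show (⨅ q : S × S, μ (H.rAct u q.1) ⊓ σ (H.rAct v q.2))
      = (⨅ s : S, μ (H.rAct u s)) ⊓ (⨅ s : S, σ (H.rAct v s))
  rcases isEmpty_or_nonempty S with hS | hS
  · simp [iInf_of_empty]
  · rw [iInf_prod]
    simp only [iInf_inf, inf_iInf]
    exact iInf_comm
end
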